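/- Suppose the Gibbs sampler with block-size q is applied to a Gaussian target N(m, Ω⁻¹) where Ω is q-block-tridiagonal with condition number 𝒞, started from x⁰. Then there is a coupling of the chain x^k with a stationary sample z ∼ N(m, Ω⁻¹) such that E‖C^{1/2}(x^k − z)‖²_{C⁻¹} := E‖C^{-1/2}(x^k − z)‖² ≤ β^k n (1 + ‖C^{-1/2}(x⁰ − m)‖²), where C = Ω⁻¹ and β = 𝒞(1−𝒞⁻¹)²/(1 + 𝒞(1−𝒞⁻¹)²) < 1. -/

import Mathlib

open Matrix

/-- Block strictly-lower-triangular part (with respect to `q × q` blocks). -/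
def Matrix.blkLower {m q : ℕ} (Ω : Matrix (Fin m × Fin q) (Fin m × Fin q) ℝ) :
    Matrix (Fin m × Fin q) (Fin m × Fin q) ℝ :=
  Matrix.of fun p r => if r.1 < p.1 then Ω p r else 0

/-- Block-diagonal part (with respect to `q × q` blocks). -/
def Matrix.blkDiag {m q : ℕ} (Ω : Matrix (Fin m × Fin q) (Fin m × Fin q) ℝ) :
    Matrix (Fin m × Fin q) (Fin m × Fin q) ℝ :=
  Matrix.of fun p r => if p.1 = r.1 then Ω p r else 0

/-- Block strictly-upper-triangular part (with respect to `q × q` blocks). -/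
def Matrix.blkUpper {m q : ℕ} (Ω : Matrix (Fin m × Fin q) (Fin m × Fin q) ℝ) :
    Matrix (Fin m × Fin q) (Fin m × Fin q) ℝ :=
  Matrix.of fun p r => if p.1 < r.1 then Ω p r else 0

open scoped ComplexOrder in
/-- Square root of a positive semidefinite matrix (as in the older Mathlib, where it was
removed since). -/
noncomputable def Matrix.PosSemidef.sqrt {n : Type*} {𝕜 : Type*} [Fintype n] [RCLike 𝕜]
    [DecidableEq n] {A : Matrix n n 𝕜} (hA : A.PosSemidef) : Matrix n n 𝕜 :=
  hA.1.eigenvectorUnitary.1 * diagonal ((↑) ∘ Real.sqrt ∘ hA.1.eigenvalues) *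
    (star hA.1.eigenvectorUnitary : Matrix n n 𝕜)

/-!
The coupled chains differ by `x^k - z^k = G^k (x⁰ - z⁰)`, where `G = -(L + D)⁻¹ Lᵀ` is the block
Gauss–Seidel iteration matrix of the splitting `Ω = L + D + Lᵀ`, so both terms of the expected
error are controlled once `G` contracts the energy norm `‖x‖²_Ω = ‖C^{-1/2} x‖²` by a factor `β`.
With `y = (L + D)⁻¹ Ω x` one has `‖G x‖²_Ω = ‖x‖²_Ω - ‖y‖²_D`, and Cauchy–Schwarz in the
`D⁻¹`-inner product gives `‖x‖²_Ω ≤ (1 + t) ‖y‖²_D` as soon as `L D⁻¹ Lᵀ ≤ t Ω`; hence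
`β = t / (1 + t)`. For block-tridiagonal `Ω` the matrix `L D⁻¹ Lᵀ` is block diagonal, and on each
block Wielandt's inequality for two adjacent blocks gives `L D⁻¹ Lᵀ ≤ ((𝒞 - 1) / (𝒞 + 1))² D`,
which is at most `𝒞 (1 - 𝒞⁻¹)² Ω`. The trace term is the squared Frobenius norm of
`C^{-1/2} G^k C^{1/2}`, a `β^k`-contraction of the Euclidean norm, so it is at most `β^k n`.
-/

namespace Matrix

section QuadraticForm

variable {n : Type*} [Fintype n]

lemma IsSymm.dotProduct_mulVec_comm {A : Matrix n n ℝ} (hA : A.IsSymm) (x y : n → ℝ) :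
    x ⬝ᵥ A *ᵥ y = y ⬝ᵥ A *ᵥ x := by
  rw [dotProduct_mulVec, ← mulVec_transpose, hA.eq, dotProduct_comm]

lemma PosSemidef.dotProduct_mulVec_self_nonneg {A : Matrix n n ℝ} (hA : A.PosSemidef)
    (x : n → ℝ) : 0 ≤ x ⬝ᵥ A *ᵥ x := by
  simpa using hA.dotProduct_mulVec_nonneg x

lemma IsSymm.dotProduct_mulVec_add_smul {A : Matrix n n ℝ} (hA : A.IsSymm) (u w : n → ℝ)
    (s : ℝ) : (u + s • w) ⬝ᵥ A *ᵥ (u + s • w) =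
      u ⬝ᵥ A *ᵥ u + 2 * s * (u ⬝ᵥ A *ᵥ w) + s ^ 2 * (w ⬝ᵥ A *ᵥ w) := by
  simp only [mulVec_add, mulVec_smul, dotProduct_add, add_dotProduct, dotProduct_smul,
    smul_dotProduct, smul_eq_mul, hA.dotProduct_mulVec_comm w u]
  ring

theorem PosSemidef.dotProduct_mulVec_sq_le {P : Matrix n n ℝ} (hP : P.PosSemidef)
    (u v : n → ℝ) : (u ⬝ᵥ P *ᵥ v) ^ 2 ≤ (u ⬝ᵥ P *ᵥ u) * (v ⬝ᵥ P *ᵥ v) := by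
  have hsymm : P.IsSymm := isHermitian_iff_isSymm.mp hP.isHermitian
  have hquad : ∀ s : ℝ,
      0 ≤ (v ⬝ᵥ P *ᵥ v) * (s * s) + 2 * (u ⬝ᵥ P *ᵥ v) * s + u ⬝ᵥ P *ᵥ u := fun s => by
    have := hP.dotProduct_mulVec_self_nonneg (u + s • v)
    rw [hsymm.dotProduct_mulVec_add_smul] at this
    linarith
  have := discrim_le_zero hquad
  rw [discrim] at this
  nlinarith

lemma dotProduct_transpose_mulVec_self (A : Matrix n n ℝ) (x : n → ℝ) :
    x ⬝ᵥ Aᵀ *ᵥ x = x ⬝ᵥ A *ᵥ x := by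
  rw [mulVec_transpose, dotProduct_comm, ← dotProduct_mulVec]

/-- Energy identity of the Gauss–Seidel step `x ↦ x - M⁻¹ Ω x` (here `y = M⁻¹ Ω x`). -/
lemma dotProduct_mulVec_sub_of_mulVec_eq {Ω M D : Matrix n n ℝ} (hΩ : Ω.IsSymm)
    (hMD : M + Mᵀ = Ω + D) {x y : n → ℝ} (hxy : Ω *ᵥ x = M *ᵥ y) :
    (x - y) ⬝ᵥ Ω *ᵥ (x - y) = x ⬝ᵥ Ω *ᵥ x - y ⬝ᵥ D *ᵥ y := by
  have hcross : y ⬝ᵥ Ω *ᵥ x = y ⬝ᵥ M *ᵥ y := by rw [hxy]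
  have hyy : y ⬝ᵥ Ω *ᵥ y + y ⬝ᵥ D *ᵥ y = 2 * (y ⬝ᵥ M *ᵥ y) := by
    have := congrArg (fun A => y ⬝ᵥ A *ᵥ y) hMD
    simp only [add_mulVec, dotProduct_add, dotProduct_transpose_mulVec_self] at this
    linarith
  simp only [mulVec_sub, dotProduct_sub, sub_dotProduct, hΩ.dotProduct_mulVec_comm x y]
  linarith

variable [DecidableEq n]

lemma dotProduct_sub_smul_one_mulVec (A : Matrix n n ℝ) (c : ℝ) (v : n → ℝ) :
    v ⬝ᵥ (A - c • 1) *ᵥ v = v ⬝ᵥ A *ᵥ v - c * (v ⬝ᵥ v) := by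
  rw [sub_mulVec, dotProduct_sub, smul_mulVec, one_mulVec, dotProduct_smul, smul_eq_mul]

lemma dotProduct_smul_one_sub_mulVec (A : Matrix n n ℝ) (c : ℝ) (v : n → ℝ) :
    v ⬝ᵥ (c • 1 - A) *ᵥ v = c * (v ⬝ᵥ v) - v ⬝ᵥ A *ᵥ v := by
  rw [sub_mulVec, dotProduct_sub, smul_mulVec, one_mulVec, dotProduct_smul, smul_eq_mul]

theorem wielandt_inequality {A : Matrix n n ℝ} {a b : ℝ} (ha : 0 ≤ a) (hb : 0 ≤ b)
    (hlo : (A - a • 1).PosSemidef) (hhi : (b • 1 - A).PosSemidef) {u w : n → ℝ}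
    (huw : u ⬝ᵥ w = 0) :
    (b + a) ^ 2 * (u ⬝ᵥ A *ᵥ w) ^ 2 ≤ (b - a) ^ 2 * ((u ⬝ᵥ A *ᵥ u) * (w ⬝ᵥ A *ᵥ w)) := by
  have hsymm : A.IsSymm := by
    simpa using (isHermitian_iff_isSymm.mp hlo.isHermitian).add (isSymm_one.smul a)
  have hnorm : ∀ s : ℝ, (u + s • w) ⬝ᵥ (u + s • w) = u ⬝ᵥ u + s ^ 2 * (w ⬝ᵥ w) := fun s => by
    simp only [dotProduct_add, add_dotProduct, dotProduct_smul, smul_dotProduct, smul_eq_mul,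
      dotProduct_comm w u, huw]
    ring
  -- `b (A - a) ≥ 0` at `u - s w` plus `a (b - A) ≥ 0` at `u + s w`
  have hquad : ∀ s : ℝ, 0 ≤ ((b - a) * (w ⬝ᵥ A *ᵥ w)) * (s * s)
      + (-(2 * (b + a) * (u ⬝ᵥ A *ᵥ w))) * s + (b - a) * (u ⬝ᵥ A *ᵥ u) := fun s => by
    have h1 := hlo.dotProduct_mulVec_self_nonneg (u + (-s) • w)
    have h2 := hhi.dotProduct_mulVec_self_nonneg (u + s • w)
    rw [dotProduct_sub_smul_one_mulVec, hsymm.dotProduct_mulVec_add_smul, hnorm] at h1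
    rw [dotProduct_smul_one_sub_mulVec, hsymm.dotProduct_mulVec_add_smul, hnorm] at h2
    nlinarith [mul_nonneg hb h1, mul_nonneg ha h2]
  have := discrim_le_zero hquad
  rw [discrim] at this
  nlinarith

end QuadraticForm

section Support

variable {n : Type*} [Fintype n] {R : Type*} [CommSemiring R]

lemma exists_ne_zero_of_mulVec_apply_ne_zero {A : Matrix n n R} {v : n → R} {p : n}
    (h : (A *ᵥ v) p ≠ 0) : ∃ r, A p r ≠ 0 ∧ v r ≠ 0 := by
  obtain ⟨r, -, hr⟩ := Finset.exists_ne_zero_of_sum_ne_zero h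
  exact ⟨r, left_ne_zero_of_mul hr, right_ne_zero_of_mul hr⟩

lemma dotProduct_eq_zero_of_support {u v : n → R} (h : ∀ p, u p ≠ 0 → v p = 0) :
    u ⬝ᵥ v = 0 :=
  Finset.sum_eq_zero fun p _ => by
    by_cases hp : u p = 0
    · simp [hp]
    · simp [h p hp]

lemma dotProduct_mulVec_congr_of_support {A B : Matrix n n R} {u v : n → R}
    (h : ∀ p r, u p ≠ 0 → v r ≠ 0 → A p r = B p r) : u ⬝ᵥ A *ᵥ v = u ⬝ᵥ B *ᵥ v := by
  simp only [dotProduct, mulVec]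
  refine Finset.sum_congr rfl fun p _ => ?_
  by_cases hp : u p = 0
  · simp [hp]
  refine congrArg _ (Finset.sum_congr rfl fun r _ => ?_)
  by_cases hr : v r = 0
  · simp [hr]
  · rw [h p r hp hr]

end Support

section BlockDiagonal

variable {n κ : Type*} [Fintype n] {f : n → κ}

lemma dotProduct_mulVec_eq_sum_indicator [Fintype κ] {R : Type*} [CommSemiring R]
    {B : Matrix n n R} (hB : ∀ p r, f p ≠ f r → B p r = 0) (x : n → R) :
    x ⬝ᵥ B *ᵥ x = ∑ k, {p | f p = k}.indicator x ⬝ᵥ B *ᵥ {p | f p = k}.indicator x := by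
  have hentry : ∀ p r, x p * (B p r * x r) =
      ∑ k, {p | f p = k}.indicator x p * (B p r * {p | f p = k}.indicator x r) := by
    intro p r
    rw [Finset.sum_eq_single (f p) (fun k _ hk => by simp [Ne.symm hk]) (by simp)]
    by_cases h : f p = f r
    · simp [h]
    · simp [hB p r h]
  calc x ⬝ᵥ B *ᵥ x = ∑ p, ∑ r, ∑ k, {p | f p = k}.indicator x p *
        (B p r * {p | f p = k}.indicator x r) := by
        simp only [dotProduct, mulVec, Finset.mul_sum, hentry]
    _ = ∑ p, ∑ k, ∑ r, {p | f p = k}.indicator x p *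
        (B p r * {p | f p = k}.indicator x r) :=
        Finset.sum_congr rfl fun p _ => Finset.sum_comm
    _ = _ := by
        rw [Finset.sum_comm]
        simp only [dotProduct, mulVec, Finset.mul_sum]

lemma inv_apply_eq_zero_of_ne [DecidableEq n] {R : Type*} [CommRing R] {B : Matrix n n R}
    (hB : ∀ p r, f p ≠ f r → B p r = 0) {p r : n} (hpr : f p ≠ f r) : B⁻¹ p r = 0 := by
  by_cases hdet : IsUnit B.det
  swap
  · simp [nonsing_inv_apply_not_isUnit B hdet]
  classical
  let := invertibleOfIsUnitDet B hdet
  -- any linear order on the blocks turns block-diagonality into two block-triangularities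
  let : LinearOrder κ := linearOrderOfSTO WellOrderingRel
  rcases hpr.lt_or_gt with h | h
  · exact blockTriangular_inv_of_blockTriangular (b := OrderDual.toDual ∘ f)
      (fun i j hij => hB i j hij.ne') h
  · exact blockTriangular_inv_of_blockTriangular (b := f) (fun i j hij => hB i j hij.ne') h

end BlockDiagonal

section GaussSeidel

variable {n : Type*} [Fintype n] [DecidableEq n]

lemma dotProduct_mulVec_sq_le_of_mulVec_eq {Ω M D : Matrix n n ℝ} (hD : D.PosDef)
    {x y : n → ℝ} (hxy : Ω *ᵥ x = M *ᵥ y) :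
    (x ⬝ᵥ Ω *ᵥ x) ^ 2 ≤ (x ⬝ᵥ (M * D⁻¹ * Mᵀ) *ᵥ x) * (y ⬝ᵥ D *ᵥ y) := by
  have hDD : D⁻¹ * D = 1 := nonsing_inv_mul D ((isUnit_iff_isUnit_det D).mp hD.isUnit)
  have hcs := hD.inv.posSemidef.dotProduct_mulVec_sq_le (Mᵀ *ᵥ x) (D *ᵥ y)
  have hDy : D⁻¹ *ᵥ (D *ᵥ y) = y := by rw [mulVec_mulVec, hDD, one_mulVec]
  have hx : (Mᵀ *ᵥ x) ⬝ᵥ y = x ⬝ᵥ Ω *ᵥ x := by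
    rw [mulVec_transpose, ← dotProduct_mulVec, hxy]
  have hMx : (Mᵀ *ᵥ x) ⬝ᵥ D⁻¹ *ᵥ (Mᵀ *ᵥ x) = x ⬝ᵥ (M * D⁻¹ * Mᵀ) *ᵥ x := by
    rw [← mulVec_mulVec, ← mulVec_mulVec, dotProduct_mulVec x M, ← mulVec_transpose]
  rwa [hDy, hx, hMx, dotProduct_comm (D *ᵥ y)] at hcs

theorem gaussSeidel_energy_contraction {Ω L D : Matrix n n ℝ} (hΩ : Ω.PosSemidef)
    (hD : D.PosDef) (hsplit : L + D + Lᵀ = Ω) (hM : IsUnit (L + D)) {t : ℝ} (ht : 0 ≤ t)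
    (hLDL : ∀ x, x ⬝ᵥ (L * D⁻¹ * Lᵀ) *ᵥ x ≤ t * (x ⬝ᵥ Ω *ᵥ x)) (x : n → ℝ) :
    (-((L + D)⁻¹ * Lᵀ) *ᵥ x) ⬝ᵥ Ω *ᵥ (-((L + D)⁻¹ * Lᵀ) *ᵥ x) ≤
      t / (1 + t) * (x ⬝ᵥ Ω *ᵥ x) := by
  set M := L + D
  have hMdet : IsUnit M.det := (isUnit_iff_isUnit_det M).mp hM
  have hDdet : IsUnit D.det := (isUnit_iff_isUnit_det D).mp hD.isUnit
  have hDt : Dᵀ = D := (isHermitian_iff_isSymm.mp hD.isHermitian).eq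
  set y := M⁻¹ *ᵥ (Ω *ᵥ x)
  have hxy : Ω *ᵥ x = M *ᵥ y := by rw [mulVec_mulVec, mul_nonsing_inv M hMdet, one_mulVec]
  have hstep : -(M⁻¹ * Lᵀ) *ᵥ x = x - y := by
    have hMΩ : M⁻¹ * Ω = 1 + M⁻¹ * Lᵀ := by
      rw [← hsplit, Matrix.mul_add, nonsing_inv_mul M hMdet]
    simp only [y, mulVec_mulVec, hMΩ, add_mulVec, one_mulVec, neg_mulVec]
    abel
  have hMD : M + Mᵀ = Ω + D := by
    rw [← hsplit, transpose_add, hDt]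
    abel
  have hMDM : M * D⁻¹ * Mᵀ = Ω + L * D⁻¹ * Lᵀ := by
    rw [← hsplit, transpose_add, hDt]
    simp only [M, add_mul, mul_add, mul_nonsing_inv D hDdet, Matrix.mul_assoc,
      nonsing_inv_mul D hDdet, Matrix.mul_one, Matrix.one_mul]
    abel
  have hq := hΩ.dotProduct_mulVec_self_nonneg x
  have hyDy := hD.posSemidef.dotProduct_mulVec_self_nonneg y
  have hcs := dotProduct_mulVec_sq_le_of_mulVec_eq hD hxy
  rw [hMDM, add_mulVec, dotProduct_add] at hcs
  have hlow : x ⬝ᵥ Ω *ᵥ x ≤ (1 + t) * (y ⬝ᵥ D *ᵥ y) := by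
    rcases hq.eq_or_lt with h0 | hpos
    · rw [← h0]; positivity
    · nlinarith [hLDL x]
  rw [hstep, dotProduct_mulVec_sub_of_mulVec_eq (isHermitian_iff_isSymm.mp hΩ.isHermitian) hMD hxy]
  have : x ⬝ᵥ Ω *ᵥ x / (1 + t) ≤ y ⬝ᵥ D *ᵥ y := (div_le_iff₀' (by positivity)).2 hlow
  have he : t / (1 + t) * (x ⬝ᵥ Ω *ᵥ x) = x ⬝ᵥ Ω *ᵥ x - x ⬝ᵥ Ω *ᵥ x / (1 + t) := by
    field_simp; ring
  linarith

lemma dotProduct_pow_mulVec_le {Ω G : Matrix n n ℝ} {β : ℝ} (hβ : 0 ≤ β)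
    (hG : ∀ x, (G *ᵥ x) ⬝ᵥ Ω *ᵥ (G *ᵥ x) ≤ β * (x ⬝ᵥ Ω *ᵥ x)) (k : ℕ) (x : n → ℝ) :
    (G ^ k *ᵥ x) ⬝ᵥ Ω *ᵥ (G ^ k *ᵥ x) ≤ β ^ k * (x ⬝ᵥ Ω *ᵥ x) := by
  induction k with
  | zero => simp
  | succ k ih =>
    rw [pow_succ', ← mulVec_mulVec, pow_succ', mul_assoc]
    exact (hG _).trans (mul_le_mul_of_nonneg_left ih hβ)

end GaussSeidel

namespace PosSemidef

open scoped ComplexOrder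

variable {n 𝕜 : Type*} [Fintype n] [DecidableEq n] [RCLike 𝕜] {A : Matrix n n 𝕜}

lemma sqrt_mul_sqrt (hA : A.PosSemidef) : hA.sqrt * hA.sqrt = A := by
  have hU : (star hA.1.eigenvectorUnitary : Matrix n n 𝕜) * hA.1.eigenvectorUnitary = 1 :=
    Unitary.coe_star_mul_self _
  have hD : diagonal ((RCLike.ofReal ∘ Real.sqrt ∘ hA.1.eigenvalues : n → 𝕜)) *
      diagonal (RCLike.ofReal ∘ Real.sqrt ∘ hA.1.eigenvalues) =
        diagonal (RCLike.ofReal ∘ hA.1.eigenvalues) := by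
    rw [diagonal_mul_diagonal]
    congr 1
    funext i
    simp [← RCLike.ofReal_mul, Real.mul_self_sqrt (hA.eigenvalues_nonneg i)]
  conv_rhs => rw [hA.1.spectral_theorem, Unitary.conjStarAlgAut_apply]
  simp only [sqrt, Matrix.mul_assoc]
  rw [← Matrix.mul_assoc (star _ : Matrix n n 𝕜), hU, Matrix.one_mul,
    ← Matrix.mul_assoc _ _ (star _ : Matrix n n 𝕜), hD]

lemma isHermitian_sqrt (hA : A.PosSemidef) : hA.sqrt.IsHermitian := by
  have hdiag : star (RCLike.ofReal ∘ Real.sqrt ∘ hA.1.eigenvalues : n → 𝕜) =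
      RCLike.ofReal ∘ Real.sqrt ∘ hA.1.eigenvalues := by
    funext i
    simp
  rw [IsHermitian, sqrt, conjTranspose_mul, conjTranspose_mul, diagonal_conjTranspose, hdiag,
    ← star_eq_conjTranspose, ← star_eq_conjTranspose, star_star, Matrix.mul_assoc]

lemma sqrt_inv_mul_sqrt_inv (hA : A.PosSemidef) :
    hA.sqrt⁻¹ * hA.sqrt⁻¹ = A⁻¹ := by
  rw [← mul_inv_rev, sqrt_mul_sqrt]

lemma isUnit_sqrt_inv (hA : A.PosSemidef) (hu : IsUnit A) : IsUnit hA.sqrt⁻¹ := by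
  rw [isUnit_nonsing_inv_iff]
  exact isUnit_of_mul_isUnit_left (hA.sqrt_mul_sqrt ▸ hu)

lemma transpose_sqrt_inv {B : Matrix n n ℝ} (hB : B.PosSemidef) : (hB.sqrt⁻¹)ᵀ = hB.sqrt⁻¹ := by
  rw [transpose_nonsing_inv, (isHermitian_iff_isSymm.mp hB.isHermitian_sqrt).eq]

end PosSemidef

section Whitening

variable {m n : Type*} [Fintype m] [Fintype n]

lemma mulVec_dotProduct_mulVec_self {T Ω : Matrix n n ℝ} (hT : Tᵀ * T = Ω) (v : n → ℝ) :
    (T *ᵥ v) ⬝ᵥ (T *ᵥ v) = v ⬝ᵥ Ω *ᵥ v := by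
  rw [← hT, ← mulVec_mulVec, dotProduct_mulVec, mulVec_transpose, dotProduct_comm]

lemma sum_mulVec_sq {T Ω : Matrix n n ℝ} (hT : Tᵀ * T = Ω) (v : n → ℝ) :
    ∑ i, (T *ᵥ v) i ^ 2 = v ⬝ᵥ Ω *ᵥ v := by
  rw [← mulVec_dotProduct_mulVec_self hT]
  simp [dotProduct, sq]

lemma trace_mul_transpose_le [DecidableEq n] {A : Matrix m n ℝ} {c : ℝ}
    (hA : ∀ v, (A *ᵥ v) ⬝ᵥ (A *ᵥ v) ≤ c * (v ⬝ᵥ v)) :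
    (A * Aᵀ).trace ≤ c * Fintype.card n := by
  have hcol : ∀ j, ∑ i, A i j ^ 2 ≤ c := fun j => by
    have h := hA (Pi.single j 1)
    rw [dotProduct_single, Pi.single_eq_same, mul_one, mul_one, mulVec_single_one] at h
    simpa [dotProduct, sq] using h
  calc (A * Aᵀ).trace = ∑ j, ∑ i, A i j ^ 2 := by
        simp only [trace, diag, mul_apply, transpose_apply, sq]
        exact Finset.sum_comm
    _ ≤ ∑ _j : n, c := Finset.sum_le_sum fun j _ => hcol j
    _ = c * Fintype.card n := by simp [mul_comm]

lemma trace_mul_inv_mul_transpose_le [DecidableEq n] {Ω T G : Matrix n n ℝ} (hT : IsUnit T)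
    (hTΩ : Tᵀ * T = Ω) {c : ℝ}
    (hG : ∀ x, (G *ᵥ x) ⬝ᵥ Ω *ᵥ (G *ᵥ x) ≤ c * (x ⬝ᵥ Ω *ᵥ x)) :
    (T * G * Ω⁻¹ * Gᵀ * Tᵀ).trace ≤ c * Fintype.card n := by
  have hTdet : IsUnit T.det := (isUnit_iff_isUnit_det T).mp hT
  have hconj : T * G * Ω⁻¹ * Gᵀ * Tᵀ = (T * G * T⁻¹) * (T * G * T⁻¹)ᵀ := by
    rw [← hTΩ, mul_inv_rev, ← transpose_nonsing_inv]
    simp only [transpose_mul, Matrix.mul_assoc]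
  rw [hconj]
  refine trace_mul_transpose_le fun v => ?_
  have hTT : T *ᵥ (T⁻¹ *ᵥ v) = v := by rw [mulVec_mulVec, mul_nonsing_inv T hTdet, one_mulVec]
  calc ((T * G * T⁻¹) *ᵥ v) ⬝ᵥ ((T * G * T⁻¹) *ᵥ v)
      = (G *ᵥ (T⁻¹ *ᵥ v)) ⬝ᵥ Ω *ᵥ (G *ᵥ (T⁻¹ *ᵥ v)) := by
        rw [← mulVec_mulVec, ← mulVec_mulVec, mulVec_dotProduct_mulVec_self hTΩ]
    _ ≤ c * ((T⁻¹ *ᵥ v) ⬝ᵥ Ω *ᵥ (T⁻¹ *ᵥ v)) := hG _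
    _ = c * (v ⬝ᵥ v) := by rw [← mulVec_dotProduct_mulVec_self hTΩ, hTT]

end Whitening

section BlockSplitting

variable {m q : ℕ} {A : Matrix (Fin m × Fin q) (Fin m × Fin q) ℝ}

lemma blkLower_add_blkDiag_add_blkUpper (A : Matrix (Fin m × Fin q) (Fin m × Fin q) ℝ) :
    A.blkLower + A.blkDiag + A.blkUpper = A := by
  ext p r
  simp only [add_apply, blkLower, blkDiag, blkUpper, of_apply]
  rcases lt_trichotomy p.1 r.1 with h | h | h
  · simp [h, h.ne, not_lt.2 h.le]
  · simp [h]
  · simp [h, h.ne', not_lt.2 h.le]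

lemma IsSymm.blkUpper_eq (hA : A.IsSymm) : A.blkUpper = A.blkLowerᵀ := by
  ext p r
  simp [blkUpper, blkLower, hA.apply]

lemma blkDiag_apply_of_ne {p r : Fin m × Fin q} (h : p.1 ≠ r.1) : A.blkDiag p r = 0 := by
  simp [blkDiag, h]

lemma IsSymm.blkDiag (hA : A.IsSymm) : A.blkDiag.IsSymm :=
  IsSymm.ext fun p r => by simp [Matrix.blkDiag, eq_comm, hA.apply]

lemma blkDiag_sub (A B : Matrix (Fin m × Fin q) (Fin m × Fin q) ℝ) :
    (A - B).blkDiag = A.blkDiag - B.blkDiag := by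
  ext p r
  by_cases h : p.1 = r.1 <;> simp [blkDiag, h]

lemma blkDiag_smul_one (c : ℝ) :
    (c • 1 : Matrix (Fin m × Fin q) (Fin m × Fin q) ℝ).blkDiag = c • 1 := by
  ext p r
  by_cases h : p.1 = r.1
  · simp [blkDiag, h]
  · simp [blkDiag, h, one_apply, Prod.ext_iff]

lemma dotProduct_blkDiag_mulVec (A : Matrix (Fin m × Fin q) (Fin m × Fin q) ℝ)
    (x : Fin m × Fin q → ℝ) :
    x ⬝ᵥ A.blkDiag *ᵥ x =
      ∑ i, {p | p.1 = i}.indicator x ⬝ᵥ A *ᵥ {p | p.1 = i}.indicator x := by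
  rw [dotProduct_mulVec_eq_sum_indicator (fun _ _ => blkDiag_apply_of_ne) x]
  refine Finset.sum_congr rfl fun i _ => dotProduct_mulVec_congr_of_support fun p r hp hr => ?_
  have hpr : p.1 = r.1 :=
    (Set.mem_of_indicator_ne_zero hp).trans (Set.mem_of_indicator_ne_zero hr).symm
  simp [blkDiag, hpr]

lemma PosSemidef.blkDiag (hA : A.PosSemidef) : A.blkDiag.PosSemidef := by
  refine .of_dotProduct_mulVec_nonneg
    (isHermitian_iff_isSymm.mpr (isHermitian_iff_isSymm.mp hA.isHermitian).blkDiag) fun x => ?_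
  rw [star_trivial, dotProduct_blkDiag_mulVec]
  exact Finset.sum_nonneg fun i _ => hA.dotProduct_mulVec_self_nonneg _

lemma blkLower_apply_ne_zero
    (htri : ∀ p r : Fin m × Fin q, 1 < |(p.1 : ℤ) - (r.1 : ℤ)| → A p r = 0)
    {p r : Fin m × Fin q} (h : A.blkLower p r ≠ 0) : (r.1 : ℕ) + 1 = p.1 := by
  simp only [blkLower, of_apply, ne_eq, ite_eq_right_iff, Classical.not_imp] at h
  obtain ⟨hlt, hne⟩ := h
  have := mt (htri p r) hne
  rw [Fin.lt_def] at hlt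
  rw [not_lt, abs_le] at this
  omega

end BlockSplitting

section BlockTridiagonal

variable {m q : ℕ} {Ω : Matrix (Fin m × Fin q) (Fin m × Fin q) ℝ} {lmin lmax : ℝ}

lemma posDef_blkDiag (hlmin : 0 < lmin)
    (hmin : (Ω - lmin • (1 : Matrix (Fin m × Fin q) (Fin m × Fin q) ℝ)).PosSemidef) :
    Ω.blkDiag.PosDef := by
  have h := hmin.blkDiag
  rw [blkDiag_sub, blkDiag_smul_one] at h
  simpa using PosDef.posSemidef_add h (PosDef.one.smul hlmin)

lemma blkLower_mul_inv_blkDiag_mul_transpose_apply_of_ne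
    (htri : ∀ p r : Fin m × Fin q, 1 < |(p.1 : ℤ) - (r.1 : ℤ)| → Ω p r = 0)
    {p r : Fin m × Fin q} (hpr : p.1 ≠ r.1) :
    (Ω.blkLower * Ω.blkDiag⁻¹ * Ω.blkLowerᵀ) p r = 0 := by
  simp only [mul_apply, transpose_apply, Finset.sum_mul]
  refine Finset.sum_eq_zero fun c _ => Finset.sum_eq_zero fun b _ => ?_
  by_cases hpb : Ω.blkLower p b = 0
  · simp [hpb]
  by_cases hrc : Ω.blkLower r c = 0
  · simp [hrc]
  have hbc : b.1 ≠ c.1 := fun h => hpr <| Fin.ext <| by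
    have := blkLower_apply_ne_zero htri hpb
    have := blkLower_apply_ne_zero htri hrc
    have : (b.1 : ℕ) = c.1 := congrArg Fin.val h
    omega
  simp [inv_apply_eq_zero_of_ne (f := Prod.fst) (fun _ _ => blkDiag_apply_of_ne) hbc]

/-- On a vector `u` supported in block `i`, the vector `w = D⁻¹ Lᵀ u` lives in block `i - 1`, so
Wielandt's inequality applies to the `Ω`-inner product of `u` and `w`, which is
`u ⬝ L D⁻¹ Lᵀ u = w ⬝ Ω w`. -/
lemma dotProduct_blkLower_mul_inv_blkDiag_mulVec_le_of_block
    (htri : ∀ p r : Fin m × Fin q, 1 < |(p.1 : ℤ) - (r.1 : ℤ)| → Ω p r = 0)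
    (hlmin : 0 < lmin) (hle : lmin ≤ lmax)
    (hmin : (Ω - lmin • (1 : Matrix (Fin m × Fin q) (Fin m × Fin q) ℝ)).PosSemidef)
    (hmax : ((lmax • (1 : Matrix (Fin m × Fin q) (Fin m × Fin q) ℝ)) - Ω).PosSemidef)
    {i : Fin m} {u : Fin m × Fin q → ℝ} (hu : ∀ p, u p ≠ 0 → p.1 = i) :
    u ⬝ᵥ (Ω.blkLower * Ω.blkDiag⁻¹ * Ω.blkLowerᵀ) *ᵥ u ≤
      ((lmax - lmin) / (lmax + lmin)) ^ 2 * (u ⬝ᵥ Ω.blkDiag *ᵥ u) := by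
  set L := Ω.blkLower
  set D := Ω.blkDiag
  have hD : D.PosDef := posDef_blkDiag hlmin hmin
  have hDD : D * D⁻¹ = 1 := mul_nonsing_inv D ((isUnit_iff_isUnit_det D).mp hD.isUnit)
  set a := Lᵀ *ᵥ u
  set w := D⁻¹ *ᵥ a
  have hw : ∀ r, w r ≠ 0 → (r.1 : ℕ) + 1 = i := fun r hr => by
    obtain ⟨b, hrb, hb⟩ := exists_ne_zero_of_mulVec_apply_ne_zero hr
    obtain ⟨p, hbp, hp⟩ := exists_ne_zero_of_mulVec_apply_ne_zero hb
    have hrb' : r.1 = b.1 := by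
      by_contra h
      exact hrb (inv_apply_eq_zero_of_ne (f := Prod.fst) (fun _ _ => blkDiag_apply_of_ne) h)
    rw [hrb', blkLower_apply_ne_zero htri hbp, hu p hp]
  have hW : u ⬝ᵥ (L * D⁻¹ * Lᵀ) *ᵥ u = a ⬝ᵥ w := by
    rw [← mulVec_mulVec, ← mulVec_mulVec, dotProduct_mulVec, ← mulVec_transpose]
  have huw : u ⬝ᵥ Ω *ᵥ w = a ⬝ᵥ w := by
    rw [dotProduct_mulVec_congr_of_support (B := L) fun p r hp hr => ?_, dotProduct_mulVec,
      ← mulVec_transpose]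
    have hlt : r.1 < p.1 := by
      rw [Fin.lt_def, hu p hp, ← hw r hr]
      omega
    simp [L, blkLower, hlt]
  have hww : w ⬝ᵥ Ω *ᵥ w = a ⬝ᵥ w := by
    rw [dotProduct_mulVec_congr_of_support (B := D) fun p r hp hr => ?_, mulVec_mulVec, hDD,
      one_mulVec, dotProduct_comm]
    have : p.1 = r.1 := Fin.ext (by have := hw p hp; have := hw r hr; omega)
    simp [D, blkDiag, this]
  have huu : u ⬝ᵥ Ω *ᵥ u = u ⬝ᵥ D *ᵥ u :=
    dotProduct_mulVec_congr_of_support fun p r hp hr => by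
      simp [D, blkDiag, hu p hp, hu r hr]
  have horth : u ⬝ᵥ w = 0 := dotProduct_eq_zero_of_support fun p hp => by
    by_contra hwp
    have := hw p hwp
    rw [hu p hp] at this
    omega
  have hwiel := wielandt_inequality hlmin.le (hlmin.le.trans hle) hmin hmax horth
  rw [huw, hww, huu] at hwiel
  have hW0 : 0 ≤ a ⬝ᵥ w := hD.inv.posSemidef.dotProduct_mulVec_self_nonneg a
  have hu0 : 0 ≤ u ⬝ᵥ D *ᵥ u := hD.posSemidef.dotProduct_mulVec_self_nonneg u
  rw [hW, div_pow, div_mul_eq_mul_div, le_div_iff₀ (pow_pos (by linarith) 2)]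
  rcases hW0.eq_or_lt with h0 | hpos
  · rw [← h0, zero_mul]
    exact mul_nonneg (sq_nonneg _) hu0
  · nlinarith

lemma dotProduct_blkLower_mul_inv_blkDiag_mulVec_le
    (htri : ∀ p r : Fin m × Fin q, 1 < |(p.1 : ℤ) - (r.1 : ℤ)| → Ω p r = 0)
    (hlmin : 0 < lmin) (hle : lmin ≤ lmax)
    (hmin : (Ω - lmin • (1 : Matrix (Fin m × Fin q) (Fin m × Fin q) ℝ)).PosSemidef)
    (hmax : ((lmax • (1 : Matrix (Fin m × Fin q) (Fin m × Fin q) ℝ)) - Ω).PosSemidef)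
    (x : Fin m × Fin q → ℝ) :
    x ⬝ᵥ (Ω.blkLower * Ω.blkDiag⁻¹ * Ω.blkLowerᵀ) *ᵥ x ≤
      ((lmax - lmin) / (lmax + lmin)) ^ 2 * (x ⬝ᵥ Ω.blkDiag *ᵥ x) := by
  rw [dotProduct_mulVec_eq_sum_indicator (f := Prod.fst)
      (fun _ _ => blkLower_mul_inv_blkDiag_mul_transpose_apply_of_ne htri) x,
    dotProduct_mulVec_eq_sum_indicator (B := Ω.blkDiag) (fun _ _ => blkDiag_apply_of_ne) x,
    Finset.mul_sum]
  exact Finset.sum_le_sum fun i _ => dotProduct_blkLower_mul_inv_blkDiag_mulVec_le_of_block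
    htri hlmin hle hmin hmax fun p hp => by simpa using Set.mem_of_indicator_ne_zero hp

theorem dotProduct_blkLower_mul_inv_blkDiag_mulVec_le_condNum
    (htri : ∀ p r : Fin m × Fin q, 1 < |(p.1 : ℤ) - (r.1 : ℤ)| → Ω p r = 0)
    (hlmin : 0 < lmin) (hle : lmin ≤ lmax)
    (hmin : (Ω - lmin • (1 : Matrix (Fin m × Fin q) (Fin m × Fin q) ℝ)).PosSemidef)
    (hmax : ((lmax • (1 : Matrix (Fin m × Fin q) (Fin m × Fin q) ℝ)) - Ω).PosSemidef)
    (x : Fin m × Fin q → ℝ) :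
    x ⬝ᵥ (Ω.blkLower * Ω.blkDiag⁻¹ * Ω.blkLowerᵀ) *ᵥ x ≤
      lmax / lmin * (1 - (lmax / lmin)⁻¹) ^ 2 * (x ⬝ᵥ Ω *ᵥ x) := by
  have hlmax : 0 < lmax := hlmin.trans_le hle
  set ρ := (lmax - lmin) / (lmax + lmin)
  set t := lmax / lmin * (1 - (lmax / lmin)⁻¹) ^ 2
  have hDmax : (lmax • 1 - Ω.blkDiag).PosSemidef := by
    simpa [blkDiag_sub, blkDiag_smul_one] using hmax.blkDiag
  have hxD := hDmax.dotProduct_mulVec_self_nonneg x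
  have hxΩ := hmin.dotProduct_mulVec_self_nonneg x
  rw [dotProduct_smul_one_sub_mulVec] at hxD
  rw [dotProduct_sub_smul_one_mulVec] at hxΩ
  have hconst : ρ ^ 2 * lmax ≤ t * lmin := by
    have ht : t * lmin = (lmax - lmin) ^ 2 / lmax := by
      simp only [t]
      field_simp
    rw [ht, div_pow, div_mul_eq_mul_div, div_le_div_iff₀ (by positivity) hlmax]
    nlinarith [mul_nonneg (sq_nonneg (lmax - lmin))
      (mul_nonneg hlmin.le (by linarith : (0 : ℝ) ≤ 2 * lmax + lmin))]
  have hxx : 0 ≤ x ⬝ᵥ x := Finset.sum_nonneg fun i _ => mul_self_nonneg (x i)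
  have ht0 : 0 ≤ t := by positivity
  calc x ⬝ᵥ (Ω.blkLower * Ω.blkDiag⁻¹ * Ω.blkLowerᵀ) *ᵥ x ≤ ρ ^ 2 * (x ⬝ᵥ Ω.blkDiag *ᵥ x) :=
        dotProduct_blkLower_mul_inv_blkDiag_mulVec_le htri hlmin hle hmin hmax x
    _ ≤ ρ ^ 2 * lmax * (x ⬝ᵥ x) := by
        rw [mul_assoc]
        exact mul_le_mul_of_nonneg_left (by linarith) (sq_nonneg ρ)
    _ ≤ t * lmin * (x ⬝ᵥ x) := mul_le_mul_of_nonneg_right hconst hxx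
    _ ≤ t * (x ⬝ᵥ Ω *ᵥ x) := by
        rw [mul_assoc]
        exact mul_le_mul_of_nonneg_left (by linarith) ht0

end BlockTridiagonal

end Matrix

/-- The expected squared error `E‖C^{-1/2}(x^k - z^k)‖²` of the coupling, with `z⁰ ∼ N(m, C)`,
`C = Ω⁻¹`, and `x^k - z^k = G^k (x⁰ - z⁰)`, is the sum of the bias and trace terms on the left. -/
theorem gibbs_dimension_independent_convergence
    {m q : ℕ} (Ω : Matrix (Fin m × Fin q) (Fin m × Fin q) ℝ) (hΩ : Ω.PosDef)
    (htri : ∀ p r : Fin m × Fin q, 1 < |(p.1 : ℤ) - (r.1 : ℤ)| → Ω p r = 0)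
    (lmin lmax : ℝ) (hlmin : 0 < lmin) (hle : lmin ≤ lmax)
    (hmin : (Ω - lmin • (1 : Matrix (Fin m × Fin q) (Fin m × Fin q) ℝ)).PosSemidef)
    (hmax : ((lmax • (1 : Matrix (Fin m × Fin q) (Fin m × Fin q) ℝ)) - Ω).PosSemidef)
    (hInv : IsUnit (Ω.blkLower + Ω.blkDiag))
    (x₀ mean : Fin m × Fin q → ℝ) :
    ((lmax / lmin) * (1 - (lmax / lmin)⁻¹) ^ 2) /
        (1 + (lmax / lmin) * (1 - (lmax / lmin)⁻¹) ^ 2) < 1 ∧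
    ∀ k : ℕ,
      (∑ i : Fin m × Fin q,
          (hΩ.inv.posSemidef.sqrt⁻¹ *ᵥ
            ((-((Ω.blkLower + Ω.blkDiag)⁻¹ * Ω.blkUpper)) ^ k *ᵥ (x₀ - mean))) i ^ 2) +
        (hΩ.inv.posSemidef.sqrt⁻¹ * (-((Ω.blkLower + Ω.blkDiag)⁻¹ * Ω.blkUpper)) ^ k * Ω⁻¹ *
            ((-((Ω.blkLower + Ω.blkDiag)⁻¹ * Ω.blkUpper))ᵀ) ^ k *
            hΩ.inv.posSemidef.sqrt⁻¹).trace ≤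
      (((lmax / lmin) * (1 - (lmax / lmin)⁻¹) ^ 2) /
          (1 + (lmax / lmin) * (1 - (lmax / lmin)⁻¹) ^ 2)) ^ k * (m * q) *
        (1 + ∑ i : Fin m × Fin q, (hΩ.inv.posSemidef.sqrt⁻¹ *ᵥ (x₀ - mean)) i ^ 2) := by
  set t := lmax / lmin * (1 - (lmax / lmin)⁻¹) ^ 2
  have ht : 0 ≤ t := mul_nonneg (div_nonneg (hlmin.le.trans hle) hlmin.le) (sq_nonneg _)
  refine ⟨(div_lt_one (by positivity)).2 (lt_one_add t), fun k => ?_⟩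
  have hΩsymm : Ω.IsSymm := isHermitian_iff_isSymm.mp hΩ.isHermitian
  have hsplit : Ω.blkLower + Ω.blkDiag + Ω.blkLowerᵀ = Ω :=
    hΩsymm.blkUpper_eq ▸ blkLower_add_blkDiag_add_blkUpper Ω
  have hG : ∀ x, _ := dotProduct_pow_mulVec_le (by positivity)
    (gaussSeidel_energy_contraction hΩ.posSemidef (posDef_blkDiag hlmin hmin) hsplit hInv ht
      (dotProduct_blkLower_mul_inv_blkDiag_mulVec_le_condNum htri hlmin hle hmin hmax)) k
  set S := hΩ.inv.posSemidef
  have hTΩ : (S.sqrt⁻¹)ᵀ * S.sqrt⁻¹ = Ω := by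
    rw [S.transpose_sqrt_inv, S.sqrt_inv_mul_sqrt_inv, nonsing_inv_nonsing_inv Ω
      ((isUnit_iff_isUnit_det Ω).mp hΩ.isUnit)]
  rw [hΩsymm.blkUpper_eq, ← transpose_pow, sum_mulVec_sq hTΩ, sum_mulVec_sq hTΩ]
  have htrace := trace_mul_inv_mul_transpose_le (S.isUnit_sqrt_inv hΩ.inv.isUnit) hTΩ hG
  rw [S.transpose_sqrt_inv, Fintype.card_prod, Fintype.card_fin, Fintype.card_fin,
    Nat.cast_mul] at htrace
  set s := (x₀ - mean) ⬝ᵥ Ω *ᵥ (x₀ - mean)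
  have hβ : 0 ≤ (t / (1 + t)) ^ k := by positivity
  have hs : s ≤ m * q * s := by
    rcases isEmpty_or_nonempty (Fin m × Fin q) with _ | _
    · simp [s]
    · have hcard : (1 : ℝ) ≤ m * q := by
        exact_mod_cast (Fintype.card_pos (α := Fin m × Fin q)).trans_eq (by simp)
      nlinarith [hΩ.posSemidef.dotProduct_mulVec_self_nonneg (x₀ - mean)]
  nlinarith [hG (x₀ - mean), mul_le_mul_of_nonneg_left hs hβ]
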